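/- Let p > 2 be a prime, let u_t = (j_t, k_t) ∈ Z_p × Z_p be nonzero, and let u = b·u_t = (b·j_t, b·k_t) with 2 ≤ b < p. Then for every r ∈ Z_p, P_u(r) = P_{u_t}(s), where s = b⁻¹·(r − j_t k_t · C(b,2)) in Z_p, b⁻¹ is the multiplicative inverse of b modulo p, and C(b,2) = b(b−1)/2. -/

import Mathlib

/-!
Write `A = η^s S_{u_t}`. Multiplying spin matrices multiplies their indices up to a phase,
`S_{j,k} S_{j',k'} = η^{k j'} S_{j+j',k+k'}`, so `A^b = η^{bs + j_t k_t C(b,2)} S_{b u_t}`, and the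
choice of `s` makes this exactly `η^r S_u`. Since `p` is odd, `p ∣ C(p,2)` and hence `A^p = 1`;
as `b` is invertible mod `p`, `m ↦ bm` permutes `Z_p`, so the averages of the powers of `A^b`
and of `A` over a period agree.
-/

open Matrix

/-- `eta d = exp(2πi/d)`, the primitive `d`-th root of unity. -/
noncomputable def eta (d : ℕ) : ℂ := Complex.exp (2 * Real.pi * Complex.I / d)

/-- The generalized spin matrix `S_{j,k}`, with `(S_{j,k})_{m,n} = η^{mj}` if `n = m + k`
(mod `d`) and `0` otherwise, exponents computed with representatives `0 ≤ m, j < d`. -/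
noncomputable def spin (d : ℕ) [NeZero d] (j k : ZMod d) :
    Matrix (ZMod d) (ZMod d) ℂ :=
  Matrix.of fun m n => if n = m + k then eta d ^ (m.val * j.val) else 0

/-- The projection `P_u(r) = (1/p) Σ_{m=0}^{p-1} (η^r S_u)^m` (for `p` odd the phase
factor `α_u` equals `1`). -/
noncomputable def proj (p : ℕ) [NeZero p] (u : ZMod p × ZMod p) (r : ZMod p) :
    Matrix (ZMod p) (ZMod p) ℂ :=
  (p : ℂ)⁻¹ • ∑ m ∈ Finset.range p, ((eta p ^ r.val) • spin p u.1 u.2) ^ m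

lemma eta_pow_self (d : ℕ) (hd : d ≠ 0) : eta d ^ d = 1 :=
  (Complex.isPrimitiveRoot_exp d hd).pow_eq_one

lemma eta_pow_congr (d : ℕ) (hd : d ≠ 0) {m n : ℕ} (h : (m : ZMod d) = n) :
    eta d ^ m = eta d ^ n :=
  pow_eq_pow_of_modEq ((ZMod.natCast_eq_natCast_iff _ _ _).1 h) (eta_pow_self d hd)

lemma spin_zero_zero (d : ℕ) [NeZero d] : spin d 0 0 = 1 := by
  ext m n
  simp [spin, Matrix.one_apply, eq_comm]

lemma spin_mul_spin (d : ℕ) [NeZero d] (j k j' k' : ZMod d) :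
    spin d j k * spin d j' k' = eta d ^ (k.val * j'.val) • spin d (j + j') (k + k') := by
  ext m n
  rw [Matrix.mul_apply, Finset.sum_eq_single (m + k) (fun l _ hl => by simp [spin, hl])
    (by simp)]
  simp only [spin, Matrix.of_apply, Matrix.smul_apply, smul_eq_mul, if_true, ← add_assoc]
  split_ifs
  · rw [← pow_add, ← pow_add]
    apply eta_pow_congr d (NeZero.ne d)
    push_cast [ZMod.natCast_val, ZMod.cast_id]
    ring
  · simp

lemma smul_spin_pow (d : ℕ) [NeZero d] (s : ℕ) (j k : ZMod d) (b : ℕ) :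
    (eta d ^ s • spin d j k) ^ b =
      eta d ^ (s * b + j.val * k.val * b.choose 2) • spin d (b * j) (b * k) := by
  induction b with
  | zero => simp [spin_zero_zero]
  | succ b ih =>
    rw [pow_succ, ih, smul_mul_smul, spin_mul_spin, smul_smul, ← pow_add, ← pow_add]
    push_cast [add_one_mul (b : ZMod d)]
    congr 1
    apply eta_pow_congr d (NeZero.ne d)
    push_cast [Nat.choose_succ_succ, Nat.choose_one_right, ZMod.natCast_val, ZMod.cast_id]
    ring

lemma Nat.dvd_choose_two_self_of_odd {d : ℕ} (hd : Odd d) : d ∣ d.choose 2 := by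
  obtain ⟨t, rfl⟩ := hd
  refine ⟨t, ?_⟩
  rw [Nat.choose_two_right, Nat.add_sub_cancel, mul_comm 2 t, ← mul_assoc,
    Nat.mul_div_cancel _ two_pos]

lemma smul_spin_pow_self {d : ℕ} [NeZero d] (hd : Odd d) (s : ℕ) (j k : ZMod d) :
    (eta d ^ s • spin d j k) ^ d = 1 := by
  rw [smul_spin_pow, ZMod.natCast_self, zero_mul, zero_mul, spin_zero_zero,
    eta_pow_congr d (NeZero.ne d) (n := 0), pow_zero, one_smul]
  have hchoose : ((d.choose 2 : ℕ) : ZMod d) = 0 :=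
    (ZMod.natCast_eq_zero_iff _ _).2 (Nat.dvd_choose_two_self_of_odd hd)
  push_cast [ZMod.natCast_self, hchoose]
  ring

lemma Finset.sum_range_eq_sum_zmod_val {M : Type*} [AddCommMonoid M] (d : ℕ) [NeZero d]
    (f : ℕ → M) : ∑ m ∈ Finset.range d, f m = ∑ m : ZMod d, f m.val := by
  refine Finset.sum_nbij' (fun i => (i : ZMod d)) ZMod.val (by simp)
    (fun a _ => Finset.mem_range.2 (ZMod.val_lt a)) (fun i hi => ?_) (fun a _ => by simp)
    (fun i hi => ?_)
  · exact ZMod.val_cast_of_lt (Finset.mem_range.1 hi)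
  · rw [ZMod.val_cast_of_lt (Finset.mem_range.1 hi)]

lemma sum_range_pow_pow_eq_sum_range_pow {M : Type*} [Semiring M] {d : ℕ} [NeZero d] {A : M}
    (hA : A ^ d = 1) {b : ℕ} (hb : IsUnit (b : ZMod d)) :
    ∑ m ∈ Finset.range d, (A ^ b) ^ m = ∑ m ∈ Finset.range d, A ^ m := by
  have hpow : ∀ m : ZMod d, (A ^ b) ^ m.val = A ^ ((b : ZMod d) * m).val := fun m => by
    rw [← pow_mul, pow_eq_pow_mod _ hA, ← ZMod.val_natCast]
    push_cast [ZMod.natCast_val, ZMod.cast_id]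
    rfl
  simp only [Finset.sum_range_eq_sum_zmod_val, hpow]
  exact Fintype.sum_equiv hb.unit.mulLeft _ _ fun _ => rfl

theorem proj_smul_index_general (p : ℕ) [Fact p.Prime]
    (ut : ZMod p × ZMod p) (b : ℕ) (hb2 : 2 ≤ b) (hbp : b < p)
    (r : ZMod p) :
    proj p ((b : ZMod p) • ut) r =
      proj p ut ((b : ZMod p)⁻¹ * (r - ut.1 * ut.2 * (b.choose 2 : ZMod p))) := by
  have hb : (b : ZMod p) ≠ 0 := by
    rw [Ne, ZMod.natCast_eq_zero_iff]
    exact Nat.not_dvd_of_pos_of_lt (by omega) hbp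
  have hodd : Odd p := (Fact.out : p.Prime).odd_of_ne_two (by omega)
  set s : ZMod p := (b : ZMod p)⁻¹ * (r - ut.1 * ut.2 * (b.choose 2 : ZMod p))
  have hpow : (eta p ^ s.val • spin p ut.1 ut.2) ^ b =
      eta p ^ r.val • spin p (b * ut.1) (b * ut.2) := by
    rw [smul_spin_pow, eta_pow_congr p (NeZero.ne p)]
    push_cast [ZMod.natCast_val, ZMod.cast_id, s, mul_comm _ (b : ZMod p), ← mul_assoc,
      mul_inv_cancel₀ hb]
    ring
  simp only [proj, Prod.smul_fst, Prod.smul_snd, smul_eq_mul, ← hpow,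
    sum_range_pow_pow_eq_sum_range_pow (smul_spin_pow_self hodd _ _ _) hb.isUnit]

theorem proj_smul_index (p : ℕ) [Fact p.Prime] (hp : 2 < p)
    (ut : ZMod p × ZMod p) (hut : ut ≠ 0) (b : ℕ) (hb2 : 2 ≤ b) (hbp : b < p)
    (r : ZMod p) :
    proj p ((b : ZMod p) • ut) r =
      proj p ut ((b : ZMod p)⁻¹ * (r - ut.1 * ut.2 * (b.choose 2 : ZMod p))) :=
  proj_smul_index_general p ut b hb2 hbp r
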